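/- Let 0<α<n, let D be a dyadic grid in ℝⁿ, and let f be a non-negative bounded measurable function with compact support. Then there exist a sparse family S ⊂ D and a constant C = C(n,α) such that I_α^D f(x) ≤ C I_α^S f(x) for all x ∈ ℝⁿ. -/

import Mathlib

open MeasureTheory ENNReal Set Filter

noncomputable section

abbrev Rn (n : ℕ) := EuclideanSpace ℝ (Fin n)

/-- The half-open cube with corner `a` and side length `h`. -/
def cube {n : ℕ} (a : Rn n) (h : ℝ) : Set (Rn n) :=
  {x | ∀ i, a i ≤ x i ∧ x i < a i + h}

/-- Average of an `ℝ≥0∞`-valued function over a set (w.r.t. Lebesgue measure). -/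
def eavg {n : ℕ} (Q : Set (Rn n)) (g : Rn n → ℝ≥0∞) : ℝ≥0∞ :=
  (volume Q)⁻¹ * ∫⁻ x in Q, g x

/-- A weight: a measurable `ℝ≥0∞`-valued function which is integrable on every cube. -/
def IsWeight {n : ℕ} (w : Rn n → ℝ≥0∞) : Prop :=
  Measurable w ∧ ∀ (a : Rn n) (h : ℝ), 0 < h → (∫⁻ x in cube a h, w x) < ∞

/-- The fractional integral (Riesz potential) `I_α f`. -/
def fracInt {n : ℕ} (α : ℝ) (f : Rn n → ℝ) (x : Rn n) : ℝ :=
  ∫ y, f y / ‖x - y‖ ^ ((n : ℝ) - α)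

/-- The fractional integral of a nonnegative function, as a lower integral. -/
def fracIntNN {n : ℕ} (α : ℝ) (f : Rn n → ℝ) (x : Rn n) : ℝ≥0∞ :=
  ∫⁻ y, ENNReal.ofReal (f y) / ENNReal.ofReal (‖x - y‖ ^ ((n : ℝ) - α))

/-- The commutator `[b, I_α] f`. -/
def commFracInt {n : ℕ} (α : ℝ) (b f : Rn n → ℝ) (x : Rn n) : ℝ :=
  ∫ y, (b x - b y) * f y / ‖x - y‖ ^ ((n : ℝ) - α)

/-- The `A_{1,q}` characteristic of a weight. -/
def A1qConst {n : ℕ} (q : ℝ) (w : Rn n → ℝ≥0∞) : ℝ≥0∞ :=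
  ⨆ (a : Rn n) (h : ℝ) (_ : 0 < h),
    essSup (fun x => (eavg (cube a h) fun y => w y ^ q) ^ (1 / q) * (w x)⁻¹)
      (volume.restrict (cube a h))

/-- The `A_{p,q}` characteristic of a weight (`p'` is the conjugate exponent of `p`). -/
def ApqConst {n : ℕ} (p' q : ℝ) (w : Rn n → ℝ≥0∞) : ℝ≥0∞ :=
  ⨆ (a : Rn n) (h : ℝ) (_ : 0 < h),
    (eavg (cube a h) fun y => w y ^ q) ^ (1 / q) *
      (eavg (cube a h) fun y => w y ^ (-p')) ^ (1 / p')

/-- The Muckenhoupt `A_p` characteristic of a weight. -/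
def ApConst {n : ℕ} (p : ℝ) (σ : Rn n → ℝ≥0∞) : ℝ≥0∞ :=
  ⨆ (a : Rn n) (h : ℝ) (_ : 0 < h),
    eavg (cube a h) σ * (eavg (cube a h) fun y => σ y ^ (1 - p / (p - 1))) ^ (p - 1)

/-- The BMO norm. -/
def bmoNorm {n : ℕ} (b : Rn n → ℝ) : ℝ≥0∞ :=
  ⨆ (a : Rn n) (h : ℝ) (_ : 0 < h),
    eavg (cube a h) fun x => ENNReal.ofReal |b x - ⨍ y in cube a h, b y|

/-- A dyadic grid: a family of (corner, side length) data of cubes. -/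
structure DyadicGrid (n : ℕ) where
  cubes : Set (Rn n × ℝ)
  side_pow : ∀ c ∈ cubes, ∃ k : ℤ, c.2 = (2 : ℝ) ^ k
  nested : ∀ c ∈ cubes, ∀ c' ∈ cubes,
    cube c.1 c.2 ∩ cube c'.1 c'.2 = cube c.1 c.2 ∨
      cube c.1 c.2 ∩ cube c'.1 c'.2 = cube c'.1 c'.2 ∨
      cube c.1 c.2 ∩ cube c'.1 c'.2 = ∅
  partition : ∀ k : ℤ, ∀ x : Rn n, ∃! c, c ∈ cubes ∧ c.2 = (2 : ℝ) ^ k ∧ x ∈ cube c.1 c.2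

/-- A sparse family of cubes. -/
def IsSparse {n : ℕ} (S : Set (Rn n × ℝ)) : Prop :=
  ∀ c ∈ S,
    volume (⋃ c' ∈ {c' ∈ S | cube c'.1 c'.2 ⊂ cube c.1 c.2}, cube c'.1 c'.2) ≤
      volume (cube c.1 c.2) / 2

/-- The dyadic fractional integral operator associated to a family `S` of cubes. -/
def sumIalpha {n : ℕ} (α : ℝ) (S : Set (Rn n × ℝ)) (f : Rn n → ℝ) (x : Rn n) : ℝ≥0∞ :=
  ∑' c : S, (cube c.1.1 c.1.2).indicator
    (fun _ => volume (cube c.1.1 c.1.2) ^ (α / (n : ℝ)) *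
      eavg (cube c.1.1 c.1.2) fun y => ENNReal.ofReal (f y)) x

/-- The dyadic commutator associated to a family `S` of cubes. -/
def sumComm {n : ℕ} (α : ℝ) (S : Set (Rn n × ℝ)) (b f : Rn n → ℝ) (x : Rn n) : ℝ≥0∞ :=
  ∑' c : S, (cube c.1.1 c.1.2).indicator
    (fun z => volume (cube c.1.1 c.1.2) ^ (α / (n : ℝ)) *
      eavg (cube c.1.1 c.1.2) fun y => ENNReal.ofReal (|b z - b y| * f y)) x

/-- The dyadic fractional maximal operator associated to a family `S` of cubes. -/
def dyadicMax {n : ℕ} (α : ℝ) (S : Set (Rn n × ℝ)) (f : Rn n → ℝ) (x : Rn n) : ℝ≥0∞ :=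
  ⨆ (c : S) (_ : x ∈ cube c.1.1 c.1.2),
    volume (cube c.1.1 c.1.2) ^ (α / (n : ℝ)) *
      eavg (cube c.1.1 c.1.2) fun y => ENNReal.ofReal |f y|

/-- The normalized Luxemburg norm of `f` on `Q` w.r.t. the Young function `Φ`
and the measure `σ dx`. -/
def luxNorm {n : ℕ} (Φ : ℝ → ℝ) (Q : Set (Rn n)) (σ : Rn n → ℝ≥0∞) (f : Rn n → ℝ) : ℝ≥0∞ :=
  sInf {l : ℝ≥0∞ | ∃ lr : ℝ, 0 < lr ∧ l = ENNReal.ofReal lr ∧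
    (∫⁻ x in Q, σ x)⁻¹ * ∫⁻ x in Q, ENNReal.ofReal (Φ (|f x| / lr)) * σ x ≤ 1}

/-- The weighted dyadic Orlicz fractional maximal operator. -/
def maxOrlicz {n : ℕ} (Φ : ℝ → ℝ) (α : ℝ) (S : Set (Rn n × ℝ)) (σ : Rn n → ℝ≥0∞)
    (f : Rn n → ℝ) (x : Rn n) : ℝ≥0∞ :=
  ⨆ (c : S) (_ : x ∈ cube c.1.1 c.1.2),
    (∫⁻ y in cube c.1.1 c.1.2, σ y) ^ (α / (n : ℝ)) * luxNorm Φ (cube c.1.1 c.1.2) σ f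

/-- The weighted dyadic fractional maximal operator (`Φ(t) = t` case). -/
def maxWeighted {n : ℕ} (α : ℝ) (S : Set (Rn n × ℝ)) (σ : Rn n → ℝ≥0∞)
    (f : Rn n → ℝ) (x : Rn n) : ℝ≥0∞ :=
  ⨆ (c : S) (_ : x ∈ cube c.1.1 c.1.2),
    (∫⁻ y in cube c.1.1 c.1.2, σ y) ^ (α / (n : ℝ)) *
      ((∫⁻ y in cube c.1.1 c.1.2, σ y)⁻¹ * ∫⁻ y in cube c.1.1 c.1.2, ENNReal.ofReal |f y| * σ y)

lemma cube_eq_preimage {n : ℕ} (a : Rn n) (h : ℝ) :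
    cube a h = (MeasurableEquiv.toLp 2 (Fin n → ℝ)).symm ⁻¹'
      (Set.univ.pi fun i => Ico (a i) (a i + h)) := by
  ext x
  simp [cube, Set.mem_pi]

lemma measurableSet_cube {n : ℕ} (a : Rn n) (h : ℝ) : MeasurableSet (cube a h) := by
  rw [cube_eq_preimage]
  exact (MeasurableEquiv.measurable _) (MeasurableSet.univ_pi fun i => measurableSet_Ico)

lemma volume_cube {n : ℕ} (a : Rn n) (h : ℝ) (hh : 0 ≤ h) :
    volume (cube a h) = ENNReal.ofReal (h ^ n) := by
  rw [cube_eq_preimage,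
    (EuclideanSpace.volume_preserving_symm_measurableEquiv_toLp (Fin n)).measure_preimage
      ((MeasurableSet.univ_pi fun i => measurableSet_Ico).nullMeasurableSet),
    volume_pi_pi]
  simp [Real.volume_Ico, ← ENNReal.ofReal_pow hh]

lemma mem_cube_self {n : ℕ} (a : Rn n) (h : ℝ) (hh : 0 < h) : a ∈ cube a h :=
  fun i => ⟨le_refl _, by linarith⟩

namespace DyadicGrid
variable {n : ℕ} (D : DyadicGrid n)

/-- side length positive -/
lemma side_pos {c : Rn n × ℝ} (hc : c ∈ D.cubes) : 0 < c.2 := by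
  obtain ⟨k, hk⟩ := D.side_pow c hc
  rw [hk]; positivity

lemma corner_mem {c : Rn n × ℝ} (hc : c ∈ D.cubes) : c.1 ∈ cube c.1 c.2 :=
  mem_cube_self _ _ (D.side_pos hc)

/-- uniqueness at a given side length through a point -/
lemma eq_of_side_eq {c c' : Rn n × ℝ} (hc : c ∈ D.cubes) (hc' : c' ∈ D.cubes)
    (hs : c.2 = c'.2) {x : Rn n} (hx : x ∈ cube c.1 c.2) (hx' : x ∈ cube c'.1 c'.2) :
    c = c' := by
  obtain ⟨k, hk⟩ := D.side_pow c hc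
  obtain ⟨u, ⟨_, _, _⟩, hu⟩ := D.partition k x
  rw [hu c ⟨hc, hk, hx⟩, hu c' ⟨hc', hs ▸ hk, hx'⟩]

lemma volume_cube_eq {c : Rn n × ℝ} (hc : c ∈ D.cubes) :
    volume (cube c.1 c.2) = ENNReal.ofReal (c.2 ^ n) :=
  volume_cube _ _ (D.side_pos hc).le

lemma volume_cube_pos (hn : 0 < n) {c : Rn n × ℝ} (hc : c ∈ D.cubes) :
    0 < volume (cube c.1 c.2) := by
  rw [D.volume_cube_eq hc]
  exact ENNReal.ofReal_pos.2 (pow_pos (D.side_pos hc) n)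

lemma volume_cube_ne_top {c : Rn n × ℝ} (hc : c ∈ D.cubes) :
    volume (cube c.1 c.2) ≠ ∞ := by
  rw [D.volume_cube_eq hc]; exact ENNReal.ofReal_ne_top

/-- if cubes intersect, one is contained in the other -/
lemma subset_or_subset {c c' : Rn n × ℝ} (hc : c ∈ D.cubes) (hc' : c' ∈ D.cubes)
    (hne : (cube c.1 c.2 ∩ cube c'.1 c'.2).Nonempty) :
    cube c.1 c.2 ⊆ cube c'.1 c'.2 ∨ cube c'.1 c'.2 ⊆ cube c.1 c.2 := by
  rcases D.nested c hc c' hc' with H | H | H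
  · exact Or.inl (by rw [← H]; exact inter_subset_right)
  · exact Or.inr (by rw [← H]; exact inter_subset_left)
  · rw [H] at hne; exact absurd hne (by simp)

/-- volume monotonicity gives side monotonicity -/
lemma side_le_of_subset (hn : 0 < n) {c c' : Rn n × ℝ} (hc : c ∈ D.cubes) (hc' : c' ∈ D.cubes)
    (hsub : cube c.1 c.2 ⊆ cube c'.1 c'.2) : c.2 ≤ c'.2 := by
  have := measure_mono (μ := volume) hsub
  rw [D.volume_cube_eq hc, D.volume_cube_eq hc'] at this
  have h2 : c.2 ^ n ≤ c'.2 ^ n := by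
    have := (ENNReal.ofReal_le_ofReal_iff (pow_nonneg (D.side_pos hc').le n)).1 this
    exact this
  exact le_of_pow_le_pow_left₀ hn.ne' (D.side_pos hc').le h2

lemma eq_of_subset_side_eq {c c' : Rn n × ℝ} (hc : c ∈ D.cubes) (hc' : c' ∈ D.cubes)
    (hs : c.2 = c'.2) (hsub : cube c.1 c.2 ⊆ cube c'.1 c'.2) : c = c' :=
  D.eq_of_side_eq hc hc' hs (D.corner_mem hc) (hsub (D.corner_mem hc))

lemma side_lt_of_ssubset (hn : 0 < n) {c c' : Rn n × ℝ} (hc : c ∈ D.cubes) (hc' : c' ∈ D.cubes)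
    (hsub : cube c.1 c.2 ⊂ cube c'.1 c'.2) : c.2 < c'.2 := by
  rcases lt_or_eq_of_le (D.side_le_of_subset hn hc hc' hsub.subset) with h | h
  · exact h
  · exact absurd (D.eq_of_subset_side_eq hc hc' h hsub.subset) (by rintro rfl; exact hsub.ne rfl)

/-- the unique cube of generation k containing x -/
def at_ (k : ℤ) (x : Rn n) : Rn n × ℝ := (D.partition k x).exists.choose

lemma at_mem (k : ℤ) (x : Rn n) : D.at_ k x ∈ D.cubes := (D.partition k x).exists.choose_spec.1
lemma at_side (k : ℤ) (x : Rn n) : (D.at_ k x).2 = (2:ℝ) ^ k :=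
  (D.partition k x).exists.choose_spec.2.1
lemma mem_at (k : ℤ) (x : Rn n) : x ∈ cube (D.at_ k x).1 (D.at_ k x).2 :=
  (D.partition k x).exists.choose_spec.2.2

lemma eq_at {c : Rn n × ℝ} (hc : c ∈ D.cubes) {k : ℤ} (hk : c.2 = (2:ℝ)^k) {x : Rn n}
    (hx : x ∈ cube c.1 c.2) : c = D.at_ k x :=
  ((D.partition k x).unique ⟨hc, hk, hx⟩
    ⟨D.at_mem k x, D.at_side k x, D.mem_at k x⟩)

/-- the chain through x is monotone -/
lemma at_mono (hn : 0 < n) (x : Rn n) {j k : ℤ} (hjk : j ≤ k) :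
    cube (D.at_ j x).1 (D.at_ j x).2 ⊆ cube (D.at_ k x).1 (D.at_ k x).2 := by
  rcases D.subset_or_subset (D.at_mem j x) (D.at_mem k x) ⟨x, D.mem_at j x, D.mem_at k x⟩
    with H | H
  · exact H
  · have := D.side_le_of_subset hn (D.at_mem k x) (D.at_mem j x) H
    rw [D.at_side, D.at_side] at this
    have hkj : k ≤ j := by
      by_contra hlt
      push_neg at hlt
      exact absurd this (not_le.2 (zpow_lt_zpow_right₀ (by norm_num) hlt))
    have : j = k := le_antisymm hjk hkj
    subst this; exact subset_rfl

/-- each nonempty cube contains a point of a dense set -/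
lemma cube_inner_open {n : ℕ} (a : Rn n) (h : ℝ) (hh : 0 < h) :
    ∃ U : Set (Rn n), IsOpen U ∧ U.Nonempty ∧ U ⊆ cube a h := by
  refine ⟨⋂ i, (fun x : Rn n => x i) ⁻¹' Ioo (a i) (a i + h), ?_, ?_, ?_⟩
  · refine isOpen_iInter_of_finite fun i => ?_
    have hcont : Continuous (fun x : Rn n => x i) :=
      (continuous_apply i).comp (EuclideanSpace.equiv (Fin n) ℝ).continuous
    exact isOpen_Ioo.preimage hcont
  · refine ⟨a + (h/2) • (EuclideanSpace.equiv (Fin n) ℝ).symm 1, ?_⟩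
    simp only [mem_iInter, mem_preimage, mem_Ioo]
    intro i
    have : (a + (h/2) • (EuclideanSpace.equiv (Fin n) ℝ).symm 1) i = a i + h/2 := by
      simp [EuclideanSpace.equiv]
    rw [this]
    constructor <;> linarith
  · intro x hx i
    simp only [mem_iInter, mem_preimage, mem_Ioo] at hx
    exact ⟨(hx i).1.le, (hx i).2⟩

/-- the grid is countable -/
lemma countable_cubes (hn : 0 < n) : D.cubes.Countable := by
  classical
  have hU : D.cubes = ⋃ k : ℤ, {c ∈ D.cubes | c.2 = (2:ℝ)^k} := by
    ext c; simp only [mem_iUnion, mem_setOf_eq]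
    constructor
    · intro hc; obtain ⟨k, hk⟩ := D.side_pow c hc; exact ⟨k, hc, hk⟩
    · rintro ⟨k, hk, _⟩; exact hk
  rw [hU]
  refine countable_iUnion fun k => ?_
  obtain ⟨s, hsc, hsd⟩ := TopologicalSpace.exists_countable_dense (Rn n)
  -- choose a point of s in each cube
  have hpt : ∀ c ∈ {c ∈ D.cubes | c.2 = (2:ℝ)^k}, ∃ z ∈ s, z ∈ cube c.1 c.2 := by
    rintro c ⟨hc, _⟩
    obtain ⟨U, hUo, hUne, hUsub⟩ := cube_inner_open c.1 c.2 (D.side_pos hc)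
    obtain ⟨z, hzs, hzU⟩ := hsd.exists_mem_open hUo hUne
    exact ⟨z, hzs, hUsub hzU⟩
  choose φ hφs hφm using hpt
  refine countable_of_injective_of_countable_image (f := fun c =>
    if hc : c ∈ {c ∈ D.cubes | c.2 = (2:ℝ)^k} then φ c hc else c.1) ?_
    (hsc.mono ?_)
  · rintro c hc c' hc' he
    simp only [dif_pos hc, dif_pos hc'] at he
    exact D.eq_of_side_eq hc.1 hc'.1 (by rw [hc.2, hc'.2]) (hφm c hc) (he ▸ hφm c' hc')
  · rintro z ⟨c, hc, rfl⟩
    simp only [dif_pos hc]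
    exact hφs c hc

lemma cube_inj {c c' : Rn n × ℝ} (hn : 0 < n) (hc : c ∈ D.cubes) (hc' : c' ∈ D.cubes)
    (he : cube c.1 c.2 = cube c'.1 c'.2) : c = c' := by
  have h1 : c.2 ≤ c'.2 := D.side_le_of_subset hn hc hc' he.subset
  have h2 : c'.2 ≤ c.2 := D.side_le_of_subset hn hc' hc he.symm.subset
  exact D.eq_of_subset_side_eq hc hc' (le_antisymm h1 h2) he.subset

lemma cube_ssubset_parent (hn : 0 < n) {c : Rn n × ℝ} (hc : c ∈ D.cubes) {k : ℤ}
    (hk : c.2 = (2:ℝ)^k) :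
    cube c.1 c.2 ⊂ cube (D.at_ (k+1) c.1).1 (D.at_ (k+1) c.1).2 := by
  have hsub : cube c.1 c.2 ⊆ cube (D.at_ (k+1) c.1).1 (D.at_ (k+1) c.1).2 := by
    have : c = D.at_ k c.1 := D.eq_at hc hk (D.corner_mem hc)
    calc cube c.1 c.2 = cube (D.at_ k c.1).1 (D.at_ k c.1).2 := by rw [← this]
    _ ⊆ _ := D.at_mono hn c.1 (by omega)
  refine ssubset_of_subset_of_ne hsub fun he => ?_
  have := D.cube_inj hn hc (D.at_mem (k+1) c.1) he
  have hs := D.at_side (k+1) c.1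
  rw [← this, hk] at hs
  have : (k:ℤ) = k + 1 := zpow_right_injective₀ (by norm_num) (by norm_num) hs
  omega

end DyadicGrid

section Main
variable {n : ℕ}

/-- the average of `f` over the cube of `c` -/
def avg {n : ℕ} (f : Rn n → ℝ) (c : Rn n × ℝ) : ℝ≥0∞ :=
  eavg (cube c.1 c.2) fun y => ENNReal.ofReal (f y)

/-- The stopping ratio `2^(n+1)`. -/
def aBase (n : ℕ) : ℝ≥0∞ := 2 ^ (n + 1)

lemma one_lt_aBase (n : ℕ) : 1 < aBase n := one_lt_pow₀ one_lt_two (Nat.succ_ne_zero n)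
lemma aBase_ne_zero (n : ℕ) : aBase n ≠ 0 := (zero_lt_one.trans (one_lt_aBase n)).ne'
lemma aBase_ne_top (n : ℕ) : aBase n ≠ ∞ := by
  simp [aBase]
lemma aBase_zpow_ne_zero (n : ℕ) (m : ℤ) : aBase n ^ m ≠ 0 :=
  (ENNReal.zpow_pos (aBase_ne_zero n) (aBase_ne_top n) m).ne'
lemma aBase_zpow_ne_top (n : ℕ) (m : ℤ) : aBase n ^ m ≠ ∞ :=
  (ENNReal.zpow_lt_top (aBase_ne_zero n) (aBase_ne_top n) m).ne

lemma aBase_zpow_lt (n : ℕ) {m m' : ℤ} (h : aBase n ^ m < aBase n ^ m') : m < m' := by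
  by_contra hc
  push_neg at hc
  exact absurd (ENNReal.zpow_le_of_le (one_lt_aBase n).le hc) (not_le.2 h)

lemma two_pow_mul_aBase_zpow (n : ℕ) (m : ℤ) :
    (2:ℝ≥0∞) ^ n * aBase n ^ m ≤ aBase n ^ (m + 1) := by
  rw [ENNReal.zpow_add (aBase_ne_zero n) (aBase_ne_top n) m 1, zpow_one, mul_comm]
  refine mul_le_mul_right ?_ _
  rw [aBase]
  exact pow_le_pow_right₀ one_le_two (by omega)

/-- The sparse family: stopping cubes. -/
def Sfam (D : DyadicGrid n) (f : Rn n → ℝ) : Set (Rn n × ℝ) :=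
  {c | c ∈ D.cubes ∧ ∃ m : ℤ, aBase n ^ m < avg f c ∧
    ∀ c' ∈ D.cubes, cube c.1 c.2 ⊂ cube c'.1 c'.2 → avg f c' ≤ aBase n ^ m}

lemma Sfam_subset (D : DyadicGrid n) (f : Rn n → ℝ) : Sfam D f ⊆ D.cubes := fun _ hc => hc.1

/-- comparison of averages between a cube and its parent -/
lemma avg_le_parent (hn : 0 < n) (D : DyadicGrid n) (f : Rn n → ℝ) {c p : Rn n × ℝ}
    (hc : c ∈ D.cubes) (hp : p ∈ D.cubes) {k : ℤ} (hk : c.2 = (2:ℝ)^k)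
    (hpk : p.2 = (2:ℝ)^(k+1)) (hsub : cube c.1 c.2 ⊆ cube p.1 p.2) :
    avg f c ≤ (2:ℝ≥0∞) ^ n * avg f p := by
  have hvc : volume (cube c.1 c.2) = ENNReal.ofReal (((2:ℝ)^k) ^ n) := by
    rw [D.volume_cube_eq hc, hk]
  have hvp : volume (cube p.1 p.2) = ENNReal.ofReal (((2:ℝ)^(k+1)) ^ n) := by
    rw [D.volume_cube_eq hp, hpk]
  have hrel : volume (cube p.1 p.2) = (2:ℝ≥0∞)^n * volume (cube c.1 c.2) := by
    rw [hvc, hvp]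
    have h2 : (2:ℝ≥0∞) = ENNReal.ofReal 2 := by simp
    rw [h2, ← ENNReal.ofReal_pow (by norm_num : (0:ℝ) ≤ 2), ← ENNReal.ofReal_mul (by positivity)]
    congr 1
    rw [← mul_pow]
    congr 1
    rw [zpow_add₀ (by norm_num : (2:ℝ) ≠ 0), zpow_one]
    ring
  have hint : (∫⁻ y in cube c.1 c.2, ENNReal.ofReal (f y)) ≤
      ∫⁻ y in cube p.1 p.2, ENNReal.ofReal (f y) := lintegral_mono_set hsub
  unfold avg eavg
  rw [hrel]
  calc (volume (cube c.1 c.2))⁻¹ * ∫⁻ y in cube c.1 c.2, ENNReal.ofReal (f y)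
      ≤ (volume (cube c.1 c.2))⁻¹ * ∫⁻ y in cube p.1 p.2, ENNReal.ofReal (f y) := by gcongr
    _ = (2:ℝ≥0∞)^n * (((2:ℝ≥0∞)^n * volume (cube c.1 c.2))⁻¹ *
        ∫⁻ y in cube p.1 p.2, ENNReal.ofReal (f y)) := by
        rw [← mul_assoc, ENNReal.mul_inv (Or.inl (by positivity)) (Or.inl (by simp)),
          ← mul_assoc, ENNReal.mul_inv_cancel (by positivity) (by simp), one_mul]

lemma sparse_Sfam (hn : 0 < n) (D : DyadicGrid n) (f : Rn n → ℝ) : IsSparse (Sfam D f) := by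
  rintro c ⟨hcD, m, hm1, hm2⟩
  obtain ⟨kc, hkc⟩ := D.side_pow c hcD
  classical
  set lam : ℝ≥0∞ := aBase n ^ (m + 1) with hlam
  -- qualifying cubes
  set Qual : Set (Rn n × ℝ) :=
    {P | P ∈ D.cubes ∧ cube P.1 P.2 ⊂ cube c.1 c.2 ∧ lam < avg f P} with hQual
  -- maximal qualifying cubes
  set Mx : Set (Rn n × ℝ) :=
    {P ∈ Qual | ∀ P' ∈ Qual, cube P.1 P.2 ⊆ cube P'.1 P'.2 →
      cube P.1 P.2 = cube P'.1 P'.2} with hMx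
  -- every qualifying cube is inside a maximal one
  have hmax : ∀ P ∈ Qual, ∃ Ps ∈ Mx, cube P.1 P.2 ⊆ cube Ps.1 Ps.2 := by
    rintro P ⟨hPD, hPsub, hPavg⟩
    obtain ⟨j0, hj0⟩ := D.side_pow P hPD
    have hPeq : P = D.at_ j0 P.1 := D.eq_at hPD hj0 (D.corner_mem hPD)
    have hJb : ∀ j : ℤ, D.at_ j P.1 ∈ Qual → j ≤ kc := by
      intro j hj
      have := D.side_lt_of_ssubset hn hj.1 hcD hj.2.1
      rw [D.at_side, hkc] at this
      exact (zpow_lt_zpow_iff_right₀ (by norm_num : (1:ℝ) < 2)).1 this |>.le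
    obtain ⟨js, hjsQ, hjsmax⟩ := Int.exists_greatest_of_bdd ⟨kc, hJb⟩
      ⟨j0, by rw [← hPeq]; exact ⟨hPD, hPsub, hPavg⟩⟩
    refine ⟨D.at_ js P.1, ⟨hjsQ, ?_⟩, ?_⟩
    · rintro P' ⟨hP'D, hP'sub, hP'avg⟩ hss
      obtain ⟨j', hj'⟩ := D.side_pow P' hP'D
      have hxP' : P.1 ∈ cube P'.1 P'.2 := hss (D.mem_at js P.1)
      have hP'eq : P' = D.at_ j' P.1 := D.eq_at hP'D hj' hxP'
      have hj'J : j' ≤ js := hjsmax j' (by rw [← hP'eq]; exact ⟨hP'D, hP'sub, hP'avg⟩)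
      have hjle : js ≤ j' := by
        have := D.side_le_of_subset hn (D.at_mem js P.1) hP'D hss
        rw [D.at_side, hj'] at this
        exact (zpow_le_zpow_iff_right₀ (by norm_num : (1:ℝ) < 2)).1 this
      have : j' = js := le_antisymm hj'J hjle
      rw [hP'eq, this]
    · have hmono := D.at_mono hn P.1 (hjsmax j0 (by rw [← hPeq]; exact ⟨hPD, hPsub, hPavg⟩))
      rw [← hPeq] at hmono
      exact hmono
  -- the union of strict S-subcubes is inside the union of maximal qualifying cubes
  have hE : (⋃ c' ∈ {c' ∈ Sfam D f | cube c'.1 c'.2 ⊂ cube c.1 c.2}, cube c'.1 c'.2) ⊆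
      ⋃ P ∈ Mx, cube P.1 P.2 := by
    refine iUnion₂_subset ?_
    rintro c' ⟨⟨hc'D, m', hm'1, hm'2⟩, hss⟩
    have hQc' : c' ∈ Qual := by
      refine ⟨hc'D, hss, ?_⟩
      have h1 : avg f c ≤ aBase n ^ m' := hm'2 c hcD hss
      have hmm : m < m' := aBase_zpow_lt n (lt_of_lt_of_le hm1 h1)
      calc lam = aBase n ^ (m+1) := rfl
        _ ≤ aBase n ^ m' := ENNReal.zpow_le_of_le (one_lt_aBase n).le (by omega)
        _ < avg f c' := hm'1
    obtain ⟨Ps, hPs, hsub⟩ := hmax c' hQc'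
    exact hsub.trans (subset_iUnion₂ (s := fun P _ => cube P.1 P.2) Ps hPs)
  -- maximal cubes are pairwise disjoint
  have hdisj : (Mx : Set (Rn n × ℝ)).Pairwise
      (fun P P' => Disjoint (cube P.1 P.2) (cube P'.1 P'.2)) := by
    rintro P ⟨hPQ, hPmax⟩ P' ⟨hP'Q, hP'max⟩ hne
    by_contra hd
    rw [Set.not_disjoint_iff_nonempty_inter] at hd
    rcases D.subset_or_subset hPQ.1 hP'Q.1 hd with H | H
    · exact hne (D.cube_inj hn hPQ.1 hP'Q.1 (hPmax P' hP'Q H))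
    · exact hne (D.cube_inj hn hPQ.1 hP'Q.1 (hP'max P hPQ H).symm)
  -- countability
  have hMc : (Mx : Set (Rn n × ℝ)).Countable :=
    (D.countable_cubes hn).mono (fun P hP => hP.1.1)
  have := hMc.to_subtype
  -- volume estimate
  have key : volume (⋃ P ∈ Mx, cube P.1 P.2) ≤
      lam⁻¹ * ∫⁻ y in cube c.1 c.2, ENNReal.ofReal (f y) := by
    rw [Set.biUnion_eq_iUnion]
    have hvol : volume (⋃ P : Mx, cube (P:Rn n × ℝ).1 (P:Rn n × ℝ).2) =
        ∑' P : Mx, volume (cube (P:Rn n × ℝ).1 (P:Rn n × ℝ).2) :=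
      measure_iUnion (fun P P' hne => hdisj P.2 P'.2 (fun h => hne (Subtype.ext h)))
        (fun P => measurableSet_cube _ _)
    rw [hvol]
    have hterm : ∀ P : Mx, volume (cube (P:Rn n × ℝ).1 (P:Rn n × ℝ).2) ≤
        lam⁻¹ * ∫⁻ y in cube (P:Rn n × ℝ).1 (P:Rn n × ℝ).2, ENNReal.ofReal (f y) := by
      rintro ⟨P, ⟨hPD, hPsub, hPavg⟩, _⟩
      have hv0 : volume (cube P.1 P.2) ≠ 0 := (D.volume_cube_pos hn hPD).ne'
      have hvt : volume (cube P.1 P.2) ≠ ∞ := D.volume_cube_ne_top hPD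
      have : lam * volume (cube P.1 P.2) ≤ ∫⁻ y in cube P.1 P.2, ENNReal.ofReal (f y) := by
        have := mul_le_mul_right hPavg.le (volume (cube P.1 P.2))
        calc lam * volume (cube P.1 P.2) = volume (cube P.1 P.2) * lam := mul_comm _ _
          _ ≤ volume (cube P.1 P.2) * avg f P := this
          _ = _ := by
            unfold avg eavg
            rw [← mul_assoc, ENNReal.mul_inv_cancel hv0 hvt, one_mul]
      calc volume (cube P.1 P.2) = lam⁻¹ * (lam * volume (cube P.1 P.2)) := by
            rw [← mul_assoc, ENNReal.inv_mul_cancel (aBase_zpow_ne_zero n _)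
              (aBase_zpow_ne_top n _), one_mul]
        _ ≤ _ := by gcongr
    calc ∑' P : Mx, volume (cube (P:Rn n × ℝ).1 (P:Rn n × ℝ).2)
        ≤ ∑' P : Mx, lam⁻¹ * ∫⁻ y in cube (P:Rn n × ℝ).1 (P:Rn n × ℝ).2,
            ENNReal.ofReal (f y) := ENNReal.tsum_le_tsum hterm
      _ = lam⁻¹ * ∑' P : Mx, ∫⁻ y in cube (P:Rn n × ℝ).1 (P:Rn n × ℝ).2,
            ENNReal.ofReal (f y) := ENNReal.tsum_mul_left
      _ = lam⁻¹ * ∫⁻ y in ⋃ P : Mx, cube (P:Rn n × ℝ).1 (P:Rn n × ℝ).2,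
            ENNReal.ofReal (f y) := by
          rw [lintegral_iUnion (fun P => measurableSet_cube _ _)
            (fun P P' hne => hdisj P.2 P'.2 (fun h => hne (Subtype.ext h))) _]
      _ ≤ lam⁻¹ * ∫⁻ y in cube c.1 c.2, ENNReal.ofReal (f y) := by
          gcongr
          exact iUnion_subset fun P => (P.2.1.2.1).subset
  -- finish
  have hfc : (∫⁻ y in cube c.1 c.2, ENNReal.ofReal (f y)) =
      volume (cube c.1 c.2) * avg f c := by
    unfold avg eavg
    rw [← mul_assoc, ENNReal.mul_inv_cancel (D.volume_cube_pos hn hcD).ne'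
      (D.volume_cube_ne_top hcD), one_mul]
  have havgc : avg f c ≤ (2:ℝ≥0∞)^n * aBase n ^ m := by
    have hpar := D.cube_ssubset_parent hn hcD hkc
    calc avg f c ≤ (2:ℝ≥0∞)^n * avg f (D.at_ (kc+1) c.1) :=
          avg_le_parent hn D f hcD (D.at_mem (kc+1) c.1) hkc (D.at_side (kc+1) c.1) hpar.subset
      _ ≤ (2:ℝ≥0∞)^n * aBase n ^ m := by
          gcongr
          exact hm2 _ (D.at_mem (kc+1) c.1) hpar
  calc volume (⋃ c' ∈ {c' ∈ Sfam D f | cube c'.1 c'.2 ⊂ cube c.1 c.2}, cube c'.1 c'.2)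
      ≤ volume (⋃ P ∈ Mx, cube P.1 P.2) := measure_mono hE
    _ ≤ lam⁻¹ * ∫⁻ y in cube c.1 c.2, ENNReal.ofReal (f y) := key
    _ = lam⁻¹ * (volume (cube c.1 c.2) * avg f c) := by rw [hfc]
    _ ≤ lam⁻¹ * (volume (cube c.1 c.2) * ((2:ℝ≥0∞)^n * aBase n ^ m)) := by gcongr
    _ ≤ volume (cube c.1 c.2) / 2 := by
        have hlam2 : (2:ℝ≥0∞)^n * aBase n ^ m = lam * 2⁻¹ := by
          have he : lam = ((2:ℝ≥0∞)^n * aBase n ^ m) * 2 := by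
            rw [hlam, ENNReal.zpow_add (aBase_ne_zero n) (aBase_ne_top n) m 1, zpow_one,
              aBase, pow_succ]
            ring
          rw [he, mul_assoc, ENNReal.mul_inv_cancel two_ne_zero ENNReal.ofNat_ne_top, mul_one]
        rw [hlam2, ENNReal.div_eq_inv_mul]
        calc lam⁻¹ * (volume (cube c.1 c.2) * (lam * 2⁻¹))
            = (lam⁻¹ * lam) * (2⁻¹ * volume (cube c.1 c.2)) := by ring
          _ ≤ 2⁻¹ * volume (cube c.1 c.2) := by
              rw [ENNReal.inv_mul_cancel (aBase_zpow_ne_zero n (m+1)) (aBase_zpow_ne_top n (m+1)),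
                one_mul]

/-- weight `2^(kα)` -/
def wt (α : ℝ) (k : ℤ) : ℝ≥0∞ := ENNReal.ofReal ((2:ℝ) ^ ((k:ℝ) * α))

lemma wt_ne_zero (α : ℝ) (k : ℤ) : wt α k ≠ 0 := by
  simp only [wt, ne_eq, ENNReal.ofReal_eq_zero, not_le]
  positivity

lemma vol_rpow (hn : 0 < n) (D : DyadicGrid n) {α : ℝ} {c : Rn n × ℝ} (hc : c ∈ D.cubes)
    {k : ℤ} (hk : c.2 = (2:ℝ)^k) :
    (volume (cube c.1 c.2)) ^ (α / (n:ℝ)) = wt α k := by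
  rw [D.volume_cube_eq hc, hk, ENNReal.ofReal_rpow_of_pos (by positivity)]
  unfold wt
  congr 1
  have hn' : (n:ℝ) ≠ 0 := Nat.cast_ne_zero.2 hn.ne'
  have h1 : ((2:ℝ)^(k:ℤ)) = (2:ℝ)^((k:ℝ)) := (Real.rpow_intCast 2 k).symm
  rw [h1, ← Real.rpow_natCast ((2:ℝ)^((k:ℝ))) n,
    ← Real.rpow_mul (by norm_num : (0:ℝ) ≤ 2), ← Real.rpow_mul (by norm_num : (0:ℝ) ≤ 2)]
  congr 1
  field_simp

/-- the geometric constant -/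
def Cg (α : ℝ) : ℝ≥0∞ := (1 - ENNReal.ofReal ((2:ℝ) ^ (-α)))⁻¹

lemma Cg_ne_top {α : ℝ} (hα : 0 < α) : Cg α ≠ ∞ := by
  rw [Cg, ne_eq, ENNReal.inv_eq_top, tsub_eq_zero_iff_le, not_le]
  have : (2:ℝ) ^ (-α) < 1 := by
    rw [Real.rpow_neg (by norm_num)]
    rw [inv_lt_one_iff₀]
    right
    exact Real.one_lt_rpow_iff_of_pos (by norm_num) |>.2 (Or.inl ⟨by norm_num, hα⟩)
  calc ENNReal.ofReal ((2:ℝ)^(-α)) < ENNReal.ofReal 1 := by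
        exact (ENNReal.ofReal_lt_ofReal_iff (by norm_num)).2 this
    _ = 1 := ENNReal.ofReal_one

lemma geom_sum {α : ℝ} (hα : 0 < α) (K : ℤ) :
    ∑' k : ℤ, (if k ≤ K then wt α k else 0) = Cg α * wt α K := by
  classical
  set r : ℝ≥0∞ := ENNReal.ofReal ((2:ℝ) ^ (-α)) with hr
  have key : ∑' k : ℤ, (if k ≤ K then wt α k else 0) =
      ∑' j : ℕ, (if (K - (j:ℤ)) ≤ K then wt α (K - j) else 0) := by
    refine (tsum_eq_tsum_of_ne_zero_bij (fun j => K - (j.1 : ℤ)) ?_ ?_ ?_)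
    · rintro ⟨j, hj⟩ ⟨j', hj'⟩ he
      have he' : K - (j:ℤ) = K - (j':ℤ) := he
      have : j = j' := by omega
      exact Subtype.ext this
    · rintro k hk
      have hkK : k ≤ K := by
        by_contra hc
        exact hk (if_neg hc)
      refine ⟨⟨(K - k).toNat, ?_⟩, ?_⟩
      · have h2 : K - (((K - k).toNat : ℕ):ℤ) = k := by omega
        simp only [Function.mem_support, h2]
        rw [if_pos hkK]
        exact wt_ne_zero α k
      · show K - (((K - k).toNat : ℕ):ℤ) = k
        omega
    · rintro ⟨j, hj⟩
      rfl
  rw [key]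
  have hval : ∀ j : ℕ, (if (K - (j:ℤ)) ≤ K then wt α (K - j) else 0) = wt α K * r ^ j := by
    intro j
    rw [if_pos (by omega)]
    unfold wt
    rw [hr, ← ENNReal.ofReal_pow (by positivity), ← ENNReal.ofReal_mul (by positivity)]
    congr 1
    rw [← Real.rpow_natCast ((2:ℝ)^(-α)) j, ← Real.rpow_mul (by norm_num),
      ← Real.rpow_add (by norm_num)]
    congr 1
    push_cast
    ring
  calc ∑' j : ℕ, (if (K - (j:ℤ)) ≤ K then wt α (K - j) else 0)
      = ∑' j : ℕ, wt α K * r ^ j := tsum_congr hval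
    _ = wt α K * ∑' j : ℕ, r ^ j := ENNReal.tsum_mul_left
    _ = wt α K * (1 - r)⁻¹ := by rw [ENNReal.tsum_geometric]
    _ = Cg α * wt α K := by rw [Cg, mul_comm, hr]

/-- finiteness of the total integral -/
lemma total_ne_top (f : Rn n → ℝ) (hM : ∃ M : ℝ, ∀ x, f x ≤ M) (hcs : HasCompactSupport f) :
    (∫⁻ y, ENNReal.ofReal (f y)) ≠ ∞ := by
  obtain ⟨M, hMf⟩ := hM
  have hb : ∀ y, ENNReal.ofReal (f y) ≤
      (tsupport f).indicator (fun _ => ENNReal.ofReal M) y := by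
    intro y
    by_cases hy : y ∈ tsupport f
    · rw [Set.indicator_of_mem hy]
      exact ENNReal.ofReal_le_ofReal (hMf y)
    · rw [Set.indicator_of_notMem hy, image_eq_zero_of_notMem_tsupport hy]
      simp
  have hle : (∫⁻ y, ENNReal.ofReal (f y)) ≤ ENNReal.ofReal M * volume (tsupport f) := by
    calc (∫⁻ y, ENNReal.ofReal (f y)) ≤
        ∫⁻ y, (tsupport f).indicator (fun _ => ENNReal.ofReal M) y := lintegral_mono hb
      _ = ENNReal.ofReal M * volume (tsupport f) := by
          rw [lintegral_indicator (isClosed_tsupport f).measurableSet, setLIntegral_const]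
  exact ne_top_of_le_ne_top (ENNReal.mul_ne_top ENNReal.ofReal_ne_top hcs.measure_lt_top.ne) hle

lemma at_inj (hn : 0 < n) (D : DyadicGrid n) (x : Rn n) {k k' : ℤ}
    (h : D.at_ k x = D.at_ k' x) : k = k' := by
  have hside : (D.at_ k x).2 = (D.at_ k' x).2 := by rw [h]
  rw [D.at_side, D.at_side] at hside
  exact zpow_right_injective₀ (by norm_num) (by norm_num) hside

lemma pointwise (hn : 0 < n) {α : ℝ} (hα : 0 < α) (D : DyadicGrid n) (f : Rn n → ℝ)
    (hL : (∫⁻ y, ENNReal.ofReal (f y)) ≠ ∞) (x : Rn n) :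
    sumIalpha α D.cubes f x ≤ (aBase n * Cg α) * sumIalpha α (Sfam D f) f x := by
  classical
  set L := ∫⁻ y, ENNReal.ofReal (f y) with hLdef
  set b : ℤ → ℝ≥0∞ := fun k => avg f (D.at_ k x) with hbdef
  have hble : ∀ k : ℤ, b k ≤ (volume (cube (D.at_ k x).1 (D.at_ k x).2))⁻¹ * L := by
    intro k
    exact mul_le_mul_right (setLIntegral_le_lintegral _ _) _
  have hbfin : ∀ k : ℤ, b k ≠ ∞ := by
    intro k
    refine ne_top_of_le_ne_top (ENNReal.mul_ne_top ?_ hL) (hble k)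
    simp [ENNReal.inv_ne_top, (D.volume_cube_pos hn (D.at_mem k x)).ne']
  -- evaluation of a term of the sum at a chain cube
  have hterm : ∀ k : ℤ, (cube (D.at_ k x).1 (D.at_ k x).2).indicator
      (fun _ => volume (cube (D.at_ k x).1 (D.at_ k x).2) ^ (α / (n:ℝ)) *
        eavg (cube (D.at_ k x).1 (D.at_ k x).2) fun y => ENNReal.ofReal (f y)) x
      = wt α k * b k := by
    intro k
    rw [Set.indicator_of_mem (D.mem_at k x), vol_rpow hn D (D.at_mem k x) (D.at_side k x)]
    rfl
  -- Step 1 : rewrite the LHS as a sum over generations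
  have hLHS : sumIalpha α D.cubes f x = ∑' k : ℤ, wt α k * b k := by
    unfold sumIalpha
    refine tsum_eq_tsum_of_ne_zero_bij
      (fun k => (⟨D.at_ k.1 x, D.at_mem k.1 x⟩ : D.cubes)) ?_ ?_ ?_
    · rintro ⟨k, hk⟩ ⟨k', hk'⟩ he
      have : D.at_ k x = D.at_ k' x := congrArg Subtype.val he
      exact Subtype.ext (at_inj hn D x this)
    · rintro ⟨c, hcD⟩ hc
      have hx : x ∈ cube c.1 c.2 := by
        by_contra hxc
        exact hc (Set.indicator_of_notMem hxc _)
      obtain ⟨k, hk⟩ := D.side_pow c hcD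
      have hceq : c = D.at_ k x := D.eq_at hcD hk hx
      refine ⟨⟨k, ?_⟩, ?_⟩
      · have hcne := hc
        simp only [Function.mem_support] at hcne ⊢
        intro h0
        refine hcne ?_
        have : ((⟨c, hcD⟩ : D.cubes) : Rn n × ℝ) = D.at_ k x := hceq
        calc (cube c.1 c.2).indicator (fun _ =>
              volume (cube c.1 c.2) ^ (α / (n:ℝ)) *
                eavg (cube c.1 c.2) fun y => ENNReal.ofReal (f y)) x
            = wt α k * b k := by rw [show c = D.at_ k x from hceq]; exact hterm k
          _ = 0 := h0
      · exact Subtype.ext hceq.symm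
    · rintro ⟨k, hk⟩
      exact hterm k
  -- choose stopping exponents
  have hσex : ∀ k : ℤ, ∃ m : ℤ, b k ≠ 0 →
      (aBase n ^ m < b k ∧ b k ≤ aBase n ^ (m+1)) := by
    intro k
    by_cases hk : b k = 0
    · exact ⟨0, fun h => absurd hk h⟩
    · obtain ⟨m, hm1, hm2⟩ :=
        ENNReal.exists_mem_Ioc_zpow hk (hbfin k) (one_lt_aBase n) (aBase_ne_top n)
      exact ⟨m, fun _ => ⟨hm1, hm2⟩⟩
  choose σ hσp using hσex
  -- choose maximal generations
  have hJex : ∀ m : ℤ, ∃ J : ℤ, (∃ k, b k ≠ 0 ∧ σ k = m) →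
      (aBase n ^ m < b J ∧ ∀ j : ℤ, aBase n ^ m < b j → j ≤ J) := by
    intro m
    by_cases hm : ∃ k, b k ≠ 0 ∧ σ k = m
    swap
    · exact ⟨0, fun h => absurd h hm⟩
    obtain ⟨k0, hk0, hk0m⟩ := hm
    obtain ⟨N, hN⟩ := ENNReal.exists_nat_gt (ENNReal.div_lt_top hL (aBase_zpow_ne_zero n m)).ne
    have hbdd : ∀ j : ℤ, aBase n ^ m < b j → j ≤ N := by
      intro j hj
      set V := volume (cube (D.at_ j x).1 (D.at_ j x).2) with hV
      have h1 : V * aBase n ^ m ≤ L := by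
        calc V * aBase n ^ m ≤ V * b j := mul_le_mul_right hj.le _
          _ ≤ V * (V⁻¹ * L) := mul_le_mul_right (hble j) _
          _ = (V * V⁻¹) * L := (mul_assoc _ _ _).symm
          _ ≤ 1 * L := mul_le_mul_left (ENNReal.mul_inv_le_one V) _
          _ = L := one_mul L
      have h2 : V ≤ L / aBase n ^ m :=
        (ENNReal.le_div_iff_mul_le (Or.inl (aBase_zpow_ne_zero n m))
          (Or.inl (aBase_zpow_ne_top n m))).2 h1
      have h3 : V < N := lt_of_le_of_lt h2 hN
      by_contra hc
      push_neg at hc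
      have h4 : ((N:ℝ≥0∞)) ≤ V := by
        rw [hV, D.volume_cube_eq (D.at_mem j x), D.at_side]
        have hr : ((N:ℝ)) ≤ ((2:ℝ)^(j:ℤ))^n := by
          have h5 : (N:ℝ) ≤ (2:ℝ)^(N:ℤ) := by
            have := (Nat.lt_two_pow_self (n := N)).le
            calc (N:ℝ) ≤ ((2^N : ℕ) : ℝ) := by exact_mod_cast this
              _ = (2:ℝ)^(N:ℤ) := by push_cast; norm_cast
          calc (N:ℝ) ≤ (2:ℝ)^(N:ℤ) := h5
            _ ≤ (2:ℝ)^(j:ℤ) := zpow_le_zpow_right₀ one_le_two hc.le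
            _ ≤ ((2:ℝ)^(j:ℤ))^n := le_self_pow₀ (one_le_zpow₀ one_le_two (by omega)) hn.ne'
        calc ((N:ℝ≥0∞)) = ENNReal.ofReal (N:ℝ) := (ENNReal.ofReal_natCast N).symm
          _ ≤ ENNReal.ofReal (((2:ℝ)^(j:ℤ))^n) := ENNReal.ofReal_le_ofReal hr
      exact absurd h3 (not_lt.2 h4)
    obtain ⟨J, hJ1, hJ2⟩ := Int.exists_greatest_of_bdd ⟨(N:ℤ), hbdd⟩
      ⟨k0, by rw [← hk0m]; exact (hσp k0 hk0).1⟩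
    exact ⟨J, fun _ => ⟨hJ1, hJ2⟩⟩
  choose J hJ using hJex
  -- membership of the stopping cubes in the sparse family
  have hPS : ∀ m : ℤ, (∃ k, b k ≠ 0 ∧ σ k = m) → D.at_ (J m) x ∈ Sfam D f := by
    intro m hm
    refine ⟨D.at_mem (J m) x, m, (hJ m hm).1, ?_⟩
    intro c' hc' hss
    have hx : x ∈ cube c'.1 c'.2 := hss.subset (D.mem_at (J m) x)
    obtain ⟨k', hk'⟩ := D.side_pow c' hc'
    have hceq : c' = D.at_ k' x := D.eq_at hc' hk' hx
    have hlt : J m < k' := by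
      have := D.side_lt_of_ssubset hn (D.at_mem (J m) x) hc' hss
      rw [D.at_side, hk'] at this
      exact (zpow_lt_zpow_iff_right₀ (by norm_num : (1:ℝ) < 2)).1 this
    by_contra hcon
    push_neg at hcon
    rw [hceq] at hcon
    exact absurd ((hJ m hm).2 k' hcon) (by omega)
  -- upper bound on the average of the stopping cube
  have hJub : ∀ m : ℤ, (∃ k, b k ≠ 0 ∧ σ k = m) →
      b (J m) ≤ (2:ℝ≥0∞)^n * aBase n ^ m := by
    intro m hm
    have hpar : b (J m + 1) ≤ aBase n ^ m := by
      by_contra hcon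
      push_neg at hcon
      exact absurd ((hJ m hm).2 _ hcon) (by omega)
    calc b (J m) ≤ (2:ℝ≥0∞)^n * b (J m + 1) :=
          avg_le_parent hn D f (D.at_mem (J m) x) (D.at_mem (J m + 1) x)
            (D.at_side (J m) x) (D.at_side (J m + 1) x) (D.at_mono hn x (by omega))
      _ ≤ (2:ℝ≥0∞)^n * aBase n ^ m := mul_le_mul_right hpar _
  -- main estimate
  rw [hLHS]
  calc ∑' k : ℤ, wt α k * b k
      ≤ ∑' k : ℤ, ∑' m : ℤ,
          (if b k ≠ 0 ∧ σ k = m then aBase n ^ (m+1) * wt α k else 0) := by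
        refine ENNReal.tsum_le_tsum fun k => ?_
        by_cases hk : b k = 0
        · simp [hk]
        · have heq : ∑' m : ℤ, (if b k ≠ 0 ∧ σ k = m then aBase n ^ (m+1) * wt α k else 0)
              = aBase n ^ (σ k + 1) * wt α k := by
            rw [tsum_eq_single (σ k) (fun m' hm' => if_neg (fun hcon => hm' (hcon.2.symm)))]
            rw [if_pos ⟨hk, rfl⟩]
          rw [heq]
          calc wt α k * b k ≤ wt α k * aBase n ^ (σ k + 1) :=
                mul_le_mul_right (hσp k hk).2 _
            _ = aBase n ^ (σ k + 1) * wt α k := mul_comm _ _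
    _ = ∑' m : ℤ, ∑' k : ℤ,
          (if b k ≠ 0 ∧ σ k = m then aBase n ^ (m+1) * wt α k else 0) := ENNReal.tsum_comm
    _ ≤ ∑' m : ℤ, (if ∃ k, b k ≠ 0 ∧ σ k = m then
          (aBase n * Cg α) * (wt α (J m) * b (J m)) else 0) := by
        refine ENNReal.tsum_le_tsum fun m => ?_
        by_cases hm : ∃ k, b k ≠ 0 ∧ σ k = m
        · rw [if_pos hm]
          have hk_le : ∀ k : ℤ,
              (if b k ≠ 0 ∧ σ k = m then aBase n ^ (m+1) * wt α k else 0)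
              ≤ aBase n ^ (m+1) * (if k ≤ J m then wt α k else 0) := by
            intro k
            by_cases hc : b k ≠ 0 ∧ σ k = m
            · rw [if_pos hc, if_pos ?_]
              have hbk : aBase n ^ m < b k := by
                rw [← hc.2]
                exact (hσp k hc.1).1
              exact (hJ m hm).2 k hbk
            · rw [if_neg hc]
              exact zero_le
          calc ∑' k : ℤ, (if b k ≠ 0 ∧ σ k = m then aBase n ^ (m+1) * wt α k else 0)
              ≤ ∑' k : ℤ, aBase n ^ (m+1) * (if k ≤ J m then wt α k else 0) :=
                ENNReal.tsum_le_tsum hk_le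
            _ = aBase n ^ (m+1) * ∑' k : ℤ, (if k ≤ J m then wt α k else 0) :=
                ENNReal.tsum_mul_left
            _ = aBase n ^ (m+1) * (Cg α * wt α (J m)) := by rw [geom_sum hα]
            _ = (aBase n * Cg α) * (wt α (J m) * aBase n ^ m) := by
                rw [ENNReal.zpow_add (aBase_ne_zero n) (aBase_ne_top n) m 1, zpow_one]
                ring
            _ ≤ (aBase n * Cg α) * (wt α (J m) * b (J m)) := by
                gcongr
                exact (hJ m hm).1.le
        · rw [if_neg hm]
          have hz : ∀ k : ℤ,
              (if b k ≠ 0 ∧ σ k = m then aBase n ^ (m+1) * wt α k else 0) = 0 :=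
            fun k => if_neg (fun hc => hm ⟨k, hc⟩)
          simp [hz]
    _ = (aBase n * Cg α) * ∑' m : ℤ,
          (if ∃ k, b k ≠ 0 ∧ σ k = m then wt α (J m) * b (J m) else 0) := by
        rw [← ENNReal.tsum_mul_left]
        refine tsum_congr fun m => ?_
        by_cases hm : ∃ k, b k ≠ 0 ∧ σ k = m
        · rw [if_pos hm, if_pos hm]
        · rw [if_neg hm, if_neg hm, mul_zero]
    _ ≤ (aBase n * Cg α) * sumIalpha α (Sfam D f) f x := by
        gcongr
        set g' : ℤ → ℝ≥0∞ :=
          fun m => if ∃ k, b k ≠ 0 ∧ σ k = m then wt α (J m) * b (J m) else 0 with hg'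
        have hcond : ∀ m : ↑(Function.support g'), ∃ k, b k ≠ 0 ∧ σ k = m.1 := by
          rintro ⟨m, hm⟩
          by_contra hc
          exact hm (if_neg hc)
        have hsub1 : ∑' m : ℤ, g' m = ∑' m : ↑(Function.support g'), g' m.1 :=
          (tsum_subtype_eq_of_support_subset subset_rfl).symm
        rw [hsub1]
        set ψ : ↑(Function.support g') → ↥(Sfam D f) :=
          fun m => ⟨D.at_ (J m.1) x, hPS m.1 (hcond m)⟩ with hψ
        have hmono : ∀ (m m' : ℤ), (∃ k, b k ≠ 0 ∧ σ k = m) → (∃ k, b k ≠ 0 ∧ σ k = m') →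
            m < m' → b (J m) < b (J m') := by
          intro m m' hm hm' hlt
          calc b (J m) ≤ (2:ℝ≥0∞)^n * aBase n ^ m := hJub m hm
            _ ≤ aBase n ^ (m+1) := two_pow_mul_aBase_zpow n m
            _ ≤ aBase n ^ m' := ENNReal.zpow_le_of_le (one_lt_aBase n).le (by omega)
            _ < b (J m') := (hJ m' hm').1
        have hψinj : Function.Injective ψ := by
          rintro ⟨m, hm⟩ ⟨m', hm'⟩ he
          have heq : D.at_ (J m) x = D.at_ (J m') x := congrArg Subtype.val he
          refine Subtype.ext ?_
          by_contra hne
          have hbe : b (J m) = b (J m') := by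
            show avg f (D.at_ (J m) x) = avg f (D.at_ (J m') x)
            rw [heq]
          rcases lt_or_gt_of_ne hne with h | h
          · have := hmono m m' (hcond ⟨m, hm⟩) (hcond ⟨m', hm'⟩) h
            rw [hbe] at this
            exact lt_irrefl _ this
          · have := hmono m' m (hcond ⟨m', hm'⟩) (hcond ⟨m, hm⟩) h
            rw [← hbe] at this
            exact lt_irrefl _ this
        have hval : ∀ m : ↑(Function.support g'), g' m.1 =
            (cube (ψ m).1.1 (ψ m).1.2).indicator
              (fun _ => volume (cube (ψ m).1.1 (ψ m).1.2) ^ (α / (n:ℝ)) *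
                eavg (cube (ψ m).1.1 (ψ m).1.2) fun y => ENNReal.ofReal (f y)) x := by
          rintro ⟨m, hm⟩
          have hc : ∃ k, b k ≠ 0 ∧ σ k = m := hcond ⟨m, hm⟩
          have h1 : g' m = wt α (J m) * b (J m) := by
            simp only [hg']
            rw [if_pos hc]
          show g' m = (cube (D.at_ (J m) x).1 (D.at_ (J m) x).2).indicator
            (fun _ => volume (cube (D.at_ (J m) x).1 (D.at_ (J m) x).2) ^ (α / (n:ℝ)) *
              eavg (cube (D.at_ (J m) x).1 (D.at_ (J m) x).2) fun y => ENNReal.ofReal (f y)) x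
          rw [h1]
          exact (hterm (J m)).symm
        calc ∑' m : ↑(Function.support g'), g' m.1
            = ∑' m : ↑(Function.support g'), (cube (ψ m).1.1 (ψ m).1.2).indicator
              (fun _ => volume (cube (ψ m).1.1 (ψ m).1.2) ^ (α / (n:ℝ)) *
                eavg (cube (ψ m).1.1 (ψ m).1.2) fun y => ENNReal.ofReal (f y)) x :=
              tsum_congr hval
          _ ≤ sumIalpha α (Sfam D f) f x := by
              unfold sumIalpha
              exact tsum_comp_le_tsum_of_injective hψinj _

end Main

theorem sparse_domination (n : ℕ) (hn : 0 < n) (α : ℝ) (hα : 0 < α) (hαn : α < n) :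
    ∃ C : ℝ≥0∞, C ≠ ∞ ∧
      ∀ D : DyadicGrid n, ∀ f : Rn n → ℝ, Measurable f → (∀ x, 0 ≤ f x) →
        (∃ M : ℝ, ∀ x, f x ≤ M) → HasCompactSupport f →
        ∃ S : Set (Rn n × ℝ), S ⊆ D.cubes ∧ IsSparse S ∧
          ∀ x : Rn n, sumIalpha α D.cubes f x ≤ C * sumIalpha α S f x := by
  refine ⟨aBase n * Cg α, ENNReal.mul_ne_top (aBase_ne_top n) (Cg_ne_top hα), ?_⟩
  intro D f hmeas hpos hbd hcs
  exact ⟨Sfam D f, Sfam_subset D f, sparse_Sfam hn D f,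
    fun x => pointwise hn hα D f (total_ne_top f hbd hcs) x⟩
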